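/- arXiv:2210.07399 — 3 statements merged into one kernel-verified Lean document; each statement's English description precedes it below -/
import Mathlib

section
/- Let n ≥ 2. The expected grid length of a uniformly random grid diagram of size n equals 2n(n+1)/3. In particular the expected ratio length/(grid number) equals 2(n+1)/3, a linear function of n with slope 2/3 ≈ 0.6667. -/
/-!
Left multiplication by a permutation `g` preserves the set of grid diagrams, and inversion
exchanges rows with columns, so the vertical segments have the same total length as the
horizontal ones. Averaging over `g` shows that the pair `(σ i, τ i)` of every row is
equidistributed among the `n (n - 1)` ordered pairs of distinct columns, so a horizontal
segment has expected length `(∑ x, ∑ y, |x - y|) / (n (n - 1)) = (n³ - n) / (3 n (n - 1))`,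
that is `(n + 1) / 3`.
-/

/-- The finite set of grid diagrams of size `n`: collision-free pairs of permutations. -/
def grids (n : ℕ) : Finset (Equiv.Perm (Fin n) × Equiv.Perm (Fin n)) :=
  Finset.univ.filter fun p => ∀ i, p.1 i ≠ p.2 i

/-- The grid length of the grid diagram `(σ, τ)`: the sum of the lengths of the horizontal
segments `|σ i − τ i|` and of the vertical segments `|σ⁻¹ j − τ⁻¹ j|`. -/
def gridLength {n : ℕ} (σ τ : Equiv.Perm (Fin n)) : ℤ :=
  (∑ i : Fin n, |((σ i : ℕ) : ℤ) - ((τ i : ℕ) : ℤ)|) +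
  (∑ j : Fin n, |((σ⁻¹ j : ℕ) : ℤ) - ((τ⁻¹ j : ℕ) : ℤ)|)

open Finset Equiv Nat

theorem Equiv.Perm.exists_apply_eq_apply_eq {α : Type*} [DecidableEq α] {a b c d : α}
    (hab : a ≠ b) (hcd : c ≠ d) : ∃ h : Perm α, h c = a ∧ h d = b := by
  set s := swap c a
  have hsd : s d ≠ a := by
    simpa only [s, swap_apply_left] using s.injective.ne hcd.symm
  refine ⟨swap (s d) b * s, ?_, swap_apply_left _ _⟩
  rw [Perm.mul_apply, swap_apply_left]
  exact swap_apply_of_ne_of_ne hsd.symm hab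

theorem Equiv.Perm.sum_sum_comp {α M : Type*} [Fintype α] [AddCommMonoid M]
    (f : α → α → M) (g : Perm α) : ∑ x, ∑ y, f (g x) (g y) = ∑ x, ∑ y, f x y := by
  rw [← Equiv.sum_comp g fun x => ∑ y, f x y]
  exact sum_congr rfl fun x _ => Equiv.sum_comp g (f (g x))

theorem Equiv.Perm.forall_apply_ne_iff_inv {α : Type*} {σ τ : Perm α} :
    (∀ i, σ i ≠ τ i) ↔ ∀ j, σ⁻¹ j ≠ τ⁻¹ j := by
  have key (σ τ : Perm α) (h : ∀ i, σ i ≠ τ i) (j : α) : σ⁻¹ j ≠ τ⁻¹ j := fun hj =>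
    h (σ⁻¹ j) ((σ.apply_symm_apply j).trans (Perm.eq_inv_iff_eq.mp hj).symm)
  exact ⟨key σ τ, fun h => by simpa using key _ _ h⟩

section PermPairs

variable {α M : Type*} [Fintype α] [DecidableEq α] [AddCommMonoid M]

theorem sum_perm_apply_pair_congr (f : α → α → M) {a b c d : α} (hab : a ≠ b) (hcd : c ≠ d) :
    ∑ g : Perm α, f (g a) (g b) = ∑ g : Perm α, f (g c) (g d) := by
  obtain ⟨h, rfl, rfl⟩ := Perm.exists_apply_eq_apply_eq hab hcd
  exact Equiv.sum_comp (Equiv.mulRight h) fun g => f (g c) (g d)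

/-- Double count `∑ x, ∑ y, ∑ g, f (g x) (g y)`: every off-diagonal pair `(x, y)` contributes
the same sum over `g`, and every `g` contributes `∑ x, ∑ y, f x y`. -/
theorem card_mul_sub_one_nsmul_sum_perm_apply_pair (f : α → α → M) (hf : ∀ x, f x x = 0)
    {a b : α} (hab : a ≠ b) :
    (Fintype.card α * (Fintype.card α - 1)) • ∑ g : Perm α, f (g a) (g b) =
      (Fintype.card α)! • ∑ x, ∑ y, f x y := by
  have hrow (x : α) :
      ∑ y, ∑ g : Perm α, f (g x) (g y) = (Fintype.card α - 1) • ∑ g : Perm α, f (g a) (g b) := by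
    rw [← sum_erase univ (a := x) (by simp [hf]),
      sum_congr rfl fun y hy => sum_perm_apply_pair_congr f (ne_of_mem_erase hy).symm hab]
    simp [card_erase_of_mem]
  calc (Fintype.card α * (Fintype.card α - 1)) • ∑ g : Perm α, f (g a) (g b)
      = ∑ x, ∑ y, ∑ g : Perm α, f (g x) (g y) := by simp [hrow, mul_nsmul']
    _ = ∑ g : Perm α, ∑ x, ∑ y, f (g x) (g y) := by
        rw [sum_congr rfl fun _ _ => sum_comm, sum_comm]
    _ = (Fintype.card α)! • ∑ x, ∑ y, f x y := by simp [Perm.sum_sum_comp, Fintype.card_perm]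

end PermPairs

section Grids

variable {n : ℕ} {M : Type*} [AddCommMonoid M]

theorem mem_grids {p : Perm (Fin n) × Perm (Fin n)} : p ∈ grids n ↔ ∀ i, p.1 i ≠ p.2 i := by
  simp [grids]

theorem sum_grids_mul_left (g : Perm (Fin n)) (f : Perm (Fin n) × Perm (Fin n) → M) :
    ∑ p ∈ grids n, f (g * p.1, g * p.2) = ∑ p ∈ grids n, f p :=
  sum_equiv ((Equiv.mulLeft g).prodCongr (Equiv.mulLeft g)) (by simp [mem_grids]) fun _ _ => rfl

theorem sum_grids_inv (f : Perm (Fin n) × Perm (Fin n) → M) :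
    ∑ p ∈ grids n, f (p.1⁻¹, p.2⁻¹) = ∑ p ∈ grids n, f p := by
  refine sum_equiv ((Equiv.inv _).prodCongr (Equiv.inv _)) (fun p => ?_) fun _ _ => rfl
  simpa [mem_grids] using Perm.forall_apply_ne_iff_inv

theorem mul_sub_one_nsmul_sum_grids_sum_apply [IsAddTorsionFree M] (f : Fin n → Fin n → M)
    (hf : ∀ x, f x x = 0) :
    (n * (n - 1)) • ∑ p ∈ grids n, ∑ i, f (p.1 i) (p.2 i) =
      (#(grids n) * n) • ∑ x, ∑ y, f x y := by
  apply nsmul_right_injective (factorial_ne_zero n)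
  have hperm (p : Perm (Fin n) × Perm (Fin n)) (hp : p ∈ grids n) (i : Fin n) :
      (n * (n - 1)) • ∑ g : Perm (Fin n), f (g (p.1 i)) (g (p.2 i)) = n ! • ∑ x, ∑ y, f x y := by
    simpa using card_mul_sub_one_nsmul_sum_perm_apply_pair f hf (mem_grids.mp hp i)
  calc n ! • (n * (n - 1)) • ∑ p ∈ grids n, ∑ i, f (p.1 i) (p.2 i)
      = (n * (n - 1)) • ∑ g : Perm (Fin n), ∑ p ∈ grids n, ∑ i, f (g (p.1 i)) (g (p.2 i)) := by
        simp_rw [← Perm.mul_apply, sum_grids_mul_left _ fun p => ∑ i, f (p.1 i) (p.2 i)]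
        simp [Fintype.card_perm, smul_comm (n !)]
    _ = ∑ p ∈ grids n, ∑ i, (n * (n - 1)) • ∑ g : Perm (Fin n), f (g (p.1 i)) (g (p.2 i)) := by
        rw [sum_comm, smul_sum]
        exact sum_congr rfl fun p _ => by rw [sum_comm, smul_sum]
    _ = n ! • (#(grids n) * n) • ∑ x, ∑ y, f x y := by
        rw [sum_congr rfl fun p hp => sum_congr rfl fun i _ => hperm p hp i]
        simp [smul_comm (n !), mul_nsmul']

end Grids

section AbsSub

variable {R : Type*} [CommRing R] [LinearOrder R] [IsStrictOrderedRing R]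

theorem two_mul_sum_range_natCast_sub (m : ℕ) :
    2 * ∑ a ∈ range m, ((m : R) - a) = m * (m + 1) := by
  induction m with
  | zero => simp
  | succ m ih =>
    simp only [sum_range_succ, Nat.cast_succ, add_sub_right_comm _ (1 : R), sum_add_distrib,
      sum_const, card_range, nsmul_eq_mul]
    linear_combination ih

theorem three_mul_sum_range_sum_range_abs_sub (m : ℕ) :
    3 * ∑ a ∈ range m, ∑ b ∈ range m, |(a : R) - b| = m ^ 3 - m := by
  induction m with
  | zero => simp
  | succ m ih =>
    have hcol : ∑ a ∈ range m, |(a : R) - m| = ∑ a ∈ range m, ((m : R) - a) :=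
      sum_congr rfl fun a ha => by
        rw [abs_sub_comm, abs_of_nonneg (sub_nonneg.mpr (by exact_mod_cast (mem_range.mp ha).le))]
    have hrow : ∑ b ∈ range m, |(m : R) - b| = ∑ a ∈ range m, ((m : R) - a) := by
      rw [← hcol]; exact sum_congr rfl fun b _ => abs_sub_comm _ _
    simp only [sum_range_succ, sum_add_distrib, hcol, hrow, sub_self, abs_zero, add_zero,
      Nat.cast_succ]
    linear_combination ih + 3 * two_mul_sum_range_natCast_sub (R := R) m

end AbsSub

def horizontalLength {n : ℕ} (σ τ : Perm (Fin n)) : ℤ :=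
  ∑ i, |((σ i : ℕ) : ℤ) - ((τ i : ℕ) : ℤ)|

theorem gridLength_eq_horizontalLength_add {n : ℕ} (σ τ : Perm (Fin n)) :
    gridLength σ τ = horizontalLength σ τ + horizontalLength σ⁻¹ τ⁻¹ :=
  rfl

theorem sum_grids_gridLength (n : ℕ) :
    ∑ p ∈ grids n, gridLength p.1 p.2 = 2 * ∑ p ∈ grids n, horizontalLength p.1 p.2 := by
  simp only [gridLength_eq_horizontalLength_add, sum_add_distrib,
    sum_grids_inv fun p => horizontalLength p.1 p.2]
  ring

theorem three_mul_sum_grids_horizontalLength {n : ℕ} (hn : 2 ≤ n) :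
    3 * ∑ p ∈ grids n, horizontalLength p.1 p.2 = n * (n + 1) * #(grids n) := by
  have hrows := mul_sub_one_nsmul_sum_grids_sum_apply
    (fun x y : Fin n => |((x : ℕ) : ℤ) - ((y : ℕ) : ℤ)|) (by simp)
  have hdist : 3 * ∑ x : Fin n, ∑ y : Fin n, |((x : ℕ) : ℤ) - ((y : ℕ) : ℤ)| = n ^ 3 - n := by
    rw [Fin.sum_univ_eq_sum_range (fun a => ∑ y : Fin n, |(a : ℤ) - ((y : ℕ) : ℤ)|),
      sum_congr rfl fun (a : ℕ) _ => Fin.sum_univ_eq_sum_range (fun b => |(a : ℤ) - b|) n]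
    exact three_mul_sum_range_sum_range_abs_sub n
  simp only [nsmul_eq_mul] at hrows
  push_cast [Nat.cast_sub (by omega : 1 ≤ n)] at hrows
  have hn' : (n : ℤ) * (n - 1) ≠ 0 := mul_ne_zero (by positivity) (by omega)
  apply mul_left_cancel₀ hn'
  unfold horizontalLength
  linear_combination 3 * hrows + #(grids n) * n * hdist

/-- For `n ≥ 2`, the expected grid length of a uniformly random grid diagram
of size `n` equals `2n(n+1)/3`; in particular the expected ratio length/(grid number) equals
`2(n+1)/3`. (Expectations are stated as sums over all grids against the cardinality of the
set of grids.) -/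
theorem expected_grid_length (n : ℕ) (hn : 2 ≤ n) :
    (∑ p ∈ grids n, (gridLength p.1 p.2 : ℚ)) =
      (2 * n * (n + 1) / 3) * (grids n).card ∧
    (∑ p ∈ grids n, (gridLength p.1 p.2 : ℚ) / n) =
      (2 * (n + 1) / 3) * (grids n).card := by
  have hlen : 3 * ∑ p ∈ grids n, (gridLength p.1 p.2 : ℚ) = 2 * n * (n + 1) * #(grids n) := by
    have h : 3 * ∑ p ∈ grids n, gridLength p.1 p.2 = 2 * n * (n + 1) * #(grids n) := by
      rw [sum_grids_gridLength]
      linear_combination 2 * three_mul_sum_grids_horizontalLength hn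
    exact_mod_cast h
  have hn0 : (n : ℚ) ≠ 0 := by positivity
  refine ⟨by linear_combination hlen / 3, ?_⟩
  rw [← sum_div]
  field_simp
  linear_combination hlen
end

section
/- Let n ≥ 2. The expected Thurston–Bennequin number of a uniformly random grid diagram of size n equals −n/2. In particular the average Thurston–Bennequin number lies on a line of slope −1/2 as a function of the grid number n. -/
/-- The set of crossings of the grid diagram `(σ, τ)`. -/
def crossings {n : ℕ} (σ τ : Equiv.Perm (Fin n)) : Finset (Fin n × Fin n) :=
  Finset.univ.filter fun ij =>
    min (σ ij.1) (τ ij.1) < ij.2 ∧ ij.2 < max (σ ij.1) (τ ij.1) ∧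
    min (σ⁻¹ ij.2) (τ⁻¹ ij.2) < ij.1 ∧ ij.1 < max (σ⁻¹ ij.2) (τ⁻¹ ij.2)

/-- The sign of the crossing `(i, j)`: `sgn((σ i − τ i) · (τ⁻¹ j − σ⁻¹ j))`. -/
def crossSign {n : ℕ} (σ τ : Equiv.Perm (Fin n)) (i j : Fin n) : ℤ :=
  Int.sign ((((σ i : ℕ) : ℤ) - ((τ i : ℕ) : ℤ)) * (((τ⁻¹ j : ℕ) : ℤ) - ((σ⁻¹ j : ℕ) : ℤ)))

/-- The writhe of the grid diagram `(σ, τ)`: the sum of the signs of its crossings. -/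
def writhe {n : ℕ} (σ τ : Equiv.Perm (Fin n)) : ℤ :=
  ∑ ij ∈ crossings σ τ, crossSign σ τ ij.1 ij.2

/-- The number of cusps (NE or SW corners) located at X-markings. -/
def cuspsX {n : ℕ} (σ τ : Equiv.Perm (Fin n)) : ℕ :=
  (Finset.univ.filter fun i : Fin n =>
    (τ i < σ i ∧ τ⁻¹ (σ i) < i) ∨ (σ i < τ i ∧ i < τ⁻¹ (σ i))).card

/-- The number of cusps (NE or SW corners) located at O-markings. -/
def cuspsO {n : ℕ} (σ τ : Equiv.Perm (Fin n)) : ℕ :=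
  (Finset.univ.filter fun i : Fin n =>
    (σ i < τ i ∧ σ⁻¹ (τ i) < i) ∨ (τ i < σ i ∧ i < σ⁻¹ (τ i))).card

/-- The cusp number `c(G)`: the total number of NE and SW corners of the grid diagram. -/
def cusps {n : ℕ} (σ τ : Equiv.Perm (Fin n)) : ℕ := cuspsX σ τ + cuspsO σ τ

/-- The Thurston–Bennequin number `tb(G) = w(G) − c(G)/2`. -/
def tb {n : ℕ} (σ τ : Equiv.Perm (Fin n)) : ℚ :=
  (writhe σ τ : ℚ) - (cusps σ τ : ℚ) / 2

/-!
Reflecting a grid diagram in a vertical line (column `j ↦ n - 1 - j`) is an involution of the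
set of grid diagrams. It reverses the sign of every crossing, so it negates the writhe, and it
turns each marking that is not a NE/SW corner into one and vice versa, so the cusp numbers of a
diagram and of its mirror image add up to `2n`. Hence `tb G + tb G' = -n` for every pair of
mirror images, and averaging over the involution gives `-n/2`.
-/

open Equiv Finset

lemma two_nsmul_sum_eq_card_nsmul_of_involution {ι M : Type*} [AddCommMonoid M]
    {s : Finset ι} {f : ι → M} {c : M} (g : ι → ι) (hg_mem : ∀ a ∈ s, g a ∈ s)
    (hg_invol : ∀ a ∈ s, g (g a) = a) (hf : ∀ a ∈ s, f a + f (g a) = c) :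
    2 • ∑ a ∈ s, f a = s.card • c := by
  have hsum_comp : ∑ a ∈ s, f (g a) = ∑ a ∈ s, f a :=
    sum_nbij' g g hg_mem hg_mem hg_invol hg_invol fun _ _ => rfl
  calc 2 • ∑ a ∈ s, f a = ∑ a ∈ s, (f a + f (g a)) := by
        rw [two_nsmul, sum_add_distrib, hsum_comp]
    _ = s.card • c := by rw [sum_congr rfl hf, sum_const]

namespace GridDiagram

variable {n : ℕ}

/-- The diagram reflected in a vertical line: column `j` becomes column `n - 1 - j`. -/
def mirror (σ : Perm (Fin n)) : Perm (Fin n) := σ.trans Fin.revPerm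

@[simp]
lemma mirror_apply (σ : Perm (Fin n)) (i : Fin n) : mirror σ i = (σ i).rev := rfl

@[simp]
lemma mirror_inv_apply (σ : Perm (Fin n)) (j : Fin n) : (mirror σ)⁻¹ j = σ⁻¹ j.rev := rfl

@[simp]
lemma mirror_mirror (σ : Perm (Fin n)) : mirror (mirror σ) = σ := by
  ext; simp

lemma mirror_mem_grids {p : Perm (Fin n) × Perm (Fin n)} (hp : p ∈ grids n) :
    (mirror p.1, mirror p.2) ∈ grids n := by
  simp_all [grids]

lemma mk_mem_crossings_mirror_iff (σ τ : Perm (Fin n)) (i j : Fin n) :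
    (i, j) ∈ crossings (mirror σ) (mirror τ) ↔ (i, j.rev) ∈ crossings σ τ := by
  simp only [crossings, mem_filter, mem_univ, true_and, mirror_apply, mirror_inv_apply,
    min_lt_iff, lt_max_iff, Fin.rev_lt_iff, Fin.lt_rev_iff]
  tauto

lemma crossSign_mirror (σ τ : Perm (Fin n)) (i j : Fin n) :
    crossSign (mirror σ) (mirror τ) i j = -crossSign σ τ i j.rev := by
  have hrev : ∀ a : Fin n, ((a.rev : ℕ) : ℤ) = n - 1 - (a : ℕ) := fun a => by
    have := a.is_lt; simp only [Fin.val_rev]; omega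
  simp only [crossSign, mirror_apply, mirror_inv_apply, hrev, ← Int.sign_neg]
  ring_nf

lemma writhe_mirror (σ τ : Perm (Fin n)) : writhe (mirror σ) (mirror τ) = -writhe σ τ := by
  rw [writhe, writhe, ← sum_neg_distrib]
  refine sum_nbij' (fun ij => (ij.1, ij.2.rev)) (fun ij => (ij.1, ij.2.rev)) ?_ ?_ ?_ ?_ ?_
  · exact fun ij h => (mk_mem_crossings_mirror_iff σ τ ij.1 ij.2).mp h
  · exact fun ij h => (mk_mem_crossings_mirror_iff σ τ ij.1 ij.2.rev).mpr (by simpa using h)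
  all_goals simp [crossSign_mirror]

lemma cuspsO_eq_cuspsX_swap (σ τ : Perm (Fin n)) : cuspsO σ τ = cuspsX τ σ := rfl

lemma cuspX_mirror_iff_not_cuspX {σ τ : Perm (Fin n)} (h : ∀ i, σ i ≠ τ i) (i : Fin n) :
    ((mirror τ i < mirror σ i ∧ (mirror τ)⁻¹ (mirror σ i) < i) ∨
        (mirror σ i < mirror τ i ∧ i < (mirror τ)⁻¹ (mirror σ i))) ↔
      ¬((τ i < σ i ∧ τ⁻¹ (σ i) < i) ∨ (σ i < τ i ∧ i < τ⁻¹ (σ i))) := by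
  have hσ : σ i ≠ τ i := h i
  have hτ : τ⁻¹ (σ i) ≠ i := fun hc => hσ (Perm.inv_eq_iff_eq.mp hc)
  simp only [mirror_apply, mirror_inv_apply, Fin.rev_rev, Fin.rev_lt_rev]
  grind

lemma cuspsX_mirror_add_cuspsX {σ τ : Perm (Fin n)} (h : ∀ i, σ i ≠ τ i) :
    cuspsX (mirror σ) (mirror τ) + cuspsX σ τ = n := by
  rw [cuspsX, cuspsX, filter_congr fun i _ => cuspX_mirror_iff_not_cuspX h i, add_comm,
    card_filter_add_card_filter_not, card_univ, Fintype.card_fin]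

lemma cusps_mirror_add_cusps {σ τ : Perm (Fin n)} (h : ∀ i, σ i ≠ τ i) :
    cusps (mirror σ) (mirror τ) + cusps σ τ = 2 * n := by
  have hX := cuspsX_mirror_add_cuspsX h
  have hO := cuspsX_mirror_add_cuspsX fun i => (h i).symm
  rw [cusps, cusps, cuspsO_eq_cuspsX_swap, cuspsO_eq_cuspsX_swap]
  omega

lemma tb_add_tb_mirror {σ τ : Perm (Fin n)} (h : ∀ i, σ i ≠ τ i) :
    tb σ τ + tb (mirror σ) (mirror τ) = -n := by
  have hc : (cusps (mirror σ) (mirror τ) : ℚ) + cusps σ τ = 2 * n := by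
    exact_mod_cast cusps_mirror_add_cusps h
  rw [tb, tb, writhe_mirror]
  push_cast
  linarith

end GridDiagram

open GridDiagram in
theorem expected_thurston_bennequin_general (n : ℕ) :
    ∑ p ∈ grids n, tb p.1 p.2 = -((n : ℚ) / 2) * (grids n).card := by
  have h := two_nsmul_sum_eq_card_nsmul_of_involution (s := grids n)
    (f := fun p => tb p.1 p.2) (c := -(n : ℚ))
    (fun p => (mirror p.1, mirror p.2)) (fun _ => mirror_mem_grids) (fun _ _ => by simp)
    fun p hp => tb_add_tb_mirror (mem_filter.mp hp).2
  rw [two_nsmul, nsmul_eq_mul] at h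
  linarith

/-- For `n ≥ 2`, the expected Thurston–Bennequin number of a uniformly
random grid diagram of size `n` equals `−n/2`; in particular the average Thurston–Bennequin
number lies on a line of slope `−1/2` as a function of the grid number `n`. -/
theorem expected_thurston_bennequin (n : ℕ) (hn : 2 ≤ n) :
    ∑ p ∈ grids n, tb p.1 p.2 = -((n : ℚ) / 2) * (grids n).card :=
  expected_thurston_bennequin_general n
end

section
/- Let G = (σ, τ) be a grid diagram of size n, let r be a row with r+1 < n, and suppose the four columns σ(r), τ(r), σ(r+1), τ(r+1) are pairwise distinct. Let I = [min(σ(r), τ(r)), max(σ(r), τ(r))] and J = [min(σ(r+1), τ(r+1)), max(σ(r+1), τ(r+1))], and assume the commutation is non-interleaving, i.e. either I and J are disjoint, or one of I, J contains the other. Let G' = (σ∘t, τ∘t) with t the transposition (r, r+1) be the grid obtained by commuting rows r and r+1. Then w(G') = w(G): a non-interleaving row commutation preserves the writhe of the grid. -/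
/-!
With `betweenSign a b c = sign (a - b)` if `c` lies strictly between `a` and `b` (and `0`
otherwise), the writhe is `∑ i j, betweenSign (σ i) (τ i) j * betweenSign (τ⁻¹ j) (σ⁻¹ j) i`.
Commuting the adjacent rows `r` and `s = r + 1` only exchanges the relative order of `r` and `s`,
so the only terms that change are those pairing row `r` with the two columns through the markings
of row `s`, and vice versa, each by `±1`. Hence the writhe changes by
`betweenSign (σ r) (τ r) (σ s) - betweenSign (σ r) (τ r) (τ s)` minus the same expression with
`r` and `s` exchanged.
If the two horizontal segments do not interleave, both endpoints of each segment lie on the same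
side of the other one, so both differences vanish.
-/

open Set Equiv

section LinearOrder

variable {α : Type*} [LinearOrder α]

def betweenSign (a b c : α) : ℤ :=
  (if b < c ∧ c < a then 1 else 0) - (if a < c ∧ c < b then 1 else 0)

lemma betweenSign_antisymm (a b c : α) : betweenSign b a c = -betweenSign a b c := by
  simp only [betweenSign]; ring

lemma betweenSign_eq_ite (a b c : α) :
    betweenSign a b c =
      if c ∈ Ioo (min a b) (max a b) then (if b < a then 1 else -1) else 0 := by
  simp only [mem_Ioo]
  grind [betweenSign]

def NonInterleaving (a b c d : α) : Prop :=
  Disjoint (Icc (min a b) (max a b)) (Icc (min c d) (max c d)) ∨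
    Icc (min a b) (max a b) ⊆ Icc (min c d) (max c d) ∨
    Icc (min c d) (max c d) ⊆ Icc (min a b) (max a b)

lemma NonInterleaving.symm {a b c d : α} (hni : NonInterleaving a b c d) :
    NonInterleaving c d a b :=
  hni.imp (·.symm) Or.symm

lemma NonInterleaving.mem_Ioo_iff {a b c d : α} (hni : NonInterleaving a b c d) (hca : c ≠ a)
    (hcb : c ≠ b) (hda : d ≠ a) (hdb : d ≠ b) :
    c ∈ Ioo (min a b) (max a b) ↔ d ∈ Ioo (min a b) (max a b) := by
  have hc : c ∈ Icc (min c d) (max c d) := ⟨min_le_left c d, le_max_left c d⟩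
  have hd : d ∈ Icc (min c d) (max c d) := ⟨min_le_right c d, le_max_right c d⟩
  rcases hni with hdisj | hsub | hsub
  · exact iff_of_false (fun h => disjoint_right.1 hdisj hc (Ioo_subset_Icc_self h))
      (fun h => disjoint_right.1 hdisj hd (Ioo_subset_Icc_self h))
  · have ha := hsub ⟨min_le_left a b, le_max_left a b⟩
    have hb := hsub ⟨min_le_right a b, le_max_right a b⟩
    simp only [mem_Icc, mem_Ioo] at ha hb ⊢
    grind
  · have hc' := hsub hc
    have hd' := hsub hd
    simp only [mem_Icc, mem_Ioo] at hc' hd' ⊢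
    grind

lemma NonInterleaving.betweenSign_eq {a b c d : α} (hni : NonInterleaving a b c d)
    (hca : c ≠ a) (hcb : c ≠ b) (hda : d ≠ a) (hdb : d ≠ b) :
    betweenSign a b c = betweenSign a b d := by
  simp only [betweenSign_eq_ite, hni.mem_Ioo_iff hca hcb hda hdb]

lemma swap_lt_swap_iff_of_covBy {r s x y : α} (hrs : r ⋖ s) (hxy : ¬(x = r ∧ y = s))
    (hyx : ¬(x = s ∧ y = r)) : swap r s x < swap r s y ↔ x < y := by
  have := hrs.lt
  have hx := hrs.lt_iff_le_right (z := x)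
  have hy := hrs.lt_iff_le_right (z := y)
  grind

lemma betweenSign_swap_of_covBy {r s a b c : α} (hrs : r ⋖ s) (hr : c = r → a ≠ s ∧ b ≠ s)
    (hs : c = s → a ≠ r ∧ b ≠ r) :
    betweenSign (swap r s a) (swap r s b) (swap r s c) = betweenSign a b c := by
  simp only [betweenSign, swap_lt_swap_iff_of_covBy hrs (x := a) (y := c) (by tauto) (by tauto),
    swap_lt_swap_iff_of_covBy hrs (x := b) (y := c) (by tauto) (by tauto),
    swap_lt_swap_iff_of_covBy hrs (x := c) (y := a) (by tauto) (by tauto),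
    swap_lt_swap_iff_of_covBy hrs (x := c) (y := b) (by tauto) (by tauto)]

lemma betweenSign_covBy_sub {r s a : α} (hrs : r ⋖ s) (har : a ≠ r) (has : a ≠ s) :
    betweenSign a r s - betweenSign a s r = 1 := by
  have := hrs.lt
  have := hrs.lt_iff_le_right (z := a)
  grind [betweenSign]

end LinearOrder

section Grid

variable {n : ℕ}

lemma ite_sign_sub_eq_betweenSign (a b c : Fin n) :
    (if min a b < c ∧ c < max a b then Int.sign (((a : ℕ) : ℤ) - ((b : ℕ) : ℤ)) else 0) =
      betweenSign a b c := by
  rw [betweenSign_eq_ite]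
  simp only [mem_Ioo]
  split_ifs with hc hba
  · exact Int.sign_eq_one_of_pos (by have := Fin.lt_def.1 hba; omega)
  · have hab : a < b := by grind
    exact Int.sign_eq_neg_one_of_neg (by have := Fin.lt_def.1 hab; omega)
  · rfl

lemma writhe_eq_sum (σ τ : Perm (Fin n)) :
    writhe σ τ = ∑ i, ∑ j, betweenSign (σ i) (τ i) j * betweenSign (τ⁻¹ j) (σ⁻¹ j) i := by
  rw [writhe, crossings, Finset.sum_filter, Fintype.sum_prod_type]
  refine Finset.sum_congr rfl fun i _ => Finset.sum_congr rfl fun j _ => ?_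
  rw [crossSign, Int.sign_mul, ← ite_sign_sub_eq_betweenSign, ← ite_sign_sub_eq_betweenSign,
    min_comm (τ⁻¹ j), max_comm (τ⁻¹ j), ite_zero_mul_ite_zero]
  simp only [and_assoc]

lemma writhe_mul_right (σ τ t : Perm (Fin n)) :
    writhe (σ * t) (τ * t) = ∑ i, ∑ j,
      betweenSign (σ i) (τ i) j * betweenSign (t⁻¹ (τ⁻¹ j)) (t⁻¹ (σ⁻¹ j)) (t⁻¹ i) := by
  rw [writhe_eq_sum, ← Equiv.sum_comp t⁻¹]
  simp [mul_inv_rev, Perm.mul_apply]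

lemma writhe_mul_swap_sub {σ τ : Perm (Fin n)} (h : ∀ i, σ i ≠ τ i) {r s : Fin n}
    (hrs : r ⋖ s) (hστ : σ r ≠ τ s) (hτσ : τ r ≠ σ s) :
    writhe (σ * swap r s) (τ * swap r s) - writhe σ τ =
      (betweenSign (σ r) (τ r) (σ s) - betweenSign (σ r) (τ r) (τ s)) -
        (betweenSign (σ s) (τ s) (σ r) - betweenSign (σ s) (τ s) (τ r)) := by
  have hne : ∀ {f : Perm (Fin n)} {x y}, x ≠ f y → f⁻¹ x ≠ y := mt Perm.inv_eq_iff_eq.1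
  have hinv : ∀ (f : Perm (Fin n)) x, f⁻¹ (f x) = x := fun _ _ => Perm.inv_eq_iff_eq.2 rfl
  rw [writhe_mul_right, writhe_eq_sum, swap_inv, ← Finset.sum_sub_distrib]
  simp_rw [← Finset.sum_sub_distrib, ← mul_sub]
  rw [Fintype.sum_eq_add r s hrs.ne fun i hi => Finset.sum_eq_zero fun j _ => by
      rw [betweenSign_swap_of_covBy hrs (absurd · hi.1) (absurd · hi.2), sub_self, mul_zero],
    Fintype.sum_eq_add (σ s) (τ s) (h s) fun j hj => by
      rw [betweenSign_swap_of_covBy hrs (fun _ => ⟨hne hj.2, hne hj.1⟩) (absurd · hrs.ne),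
        sub_self, mul_zero],
    Fintype.sum_eq_add (σ r) (τ r) (h r) fun j hj => by
      rw [betweenSign_swap_of_covBy hrs (absurd · hrs.ne') (fun _ => ⟨hne hj.2, hne hj.1⟩),
        sub_self, mul_zero]]
  have h₁ : τ⁻¹ (σ s) ≠ r := hne hτσ.symm
  have h₂ : τ⁻¹ (σ s) ≠ s := hne (h s)
  have h₃ : σ⁻¹ (τ s) ≠ r := hne hστ.symm
  have h₄ : σ⁻¹ (τ s) ≠ s := hne (h s).symm
  have h₅ : τ⁻¹ (σ r) ≠ r := hne (h r)
  have h₆ : τ⁻¹ (σ r) ≠ s := hne hστ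
  have h₇ : σ⁻¹ (τ r) ≠ r := hne (h r).symm
  have h₈ : σ⁻¹ (τ r) ≠ s := hne hτσ
  simp only [hinv, swap_apply_left, swap_apply_right, swap_apply_of_ne_of_ne h₁ h₂,
    swap_apply_of_ne_of_ne h₃ h₄, swap_apply_of_ne_of_ne h₅ h₆, swap_apply_of_ne_of_ne h₇ h₈,
    betweenSign_antisymm _ r, betweenSign_antisymm _ s]
  linear_combination betweenSign (σ r) (τ r) (σ s) * betweenSign_covBy_sub hrs h₁ h₂
    - betweenSign (σ r) (τ r) (τ s) * betweenSign_covBy_sub hrs h₃ h₄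
    - betweenSign (σ s) (τ s) (σ r) * betweenSign_covBy_sub hrs h₅ h₆
    + betweenSign (σ s) (τ s) (τ r) * betweenSign_covBy_sub hrs h₇ h₈

end Grid

theorem noninterleaving_commutation_writhe_general (n : ℕ) (σ τ : Equiv.Perm (Fin n))
    (h : ∀ i, σ i ≠ τ i) (r s : Fin n) (hs : (s : ℕ) = (r : ℕ) + 1)
    (hdist : ([σ r, τ r, σ s, τ s] : List (Fin n)).Pairwise (· ≠ ·))
    (hni :
      Disjoint (Set.Icc (min (σ r) (τ r)) (max (σ r) (τ r)))
          (Set.Icc (min (σ s) (τ s)) (max (σ s) (τ s))) ∨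
      Set.Icc (min (σ r) (τ r)) (max (σ r) (τ r)) ⊆
          Set.Icc (min (σ s) (τ s)) (max (σ s) (τ s)) ∨
      Set.Icc (min (σ s) (τ s)) (max (σ s) (τ s)) ⊆
          Set.Icc (min (σ r) (τ r)) (max (σ r) (τ r))) :
    writhe (σ * Equiv.swap r s) (τ * Equiv.swap r s) = writhe σ τ := by
  replace hni : NonInterleaving (σ r) (τ r) (σ s) (τ s) := hni
  have hrs : r ⋖ s := Fin.covBy_iff.2 (Nat.covBy_iff_add_one_eq.2 hs.symm)
  simp only [List.pairwise_cons, List.mem_cons, List.not_mem_nil, List.Pairwise.nil,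
    forall_eq_or_imp] at hdist
  obtain ⟨⟨-, hσσ, hστ, -⟩, ⟨hτσ, hττ, -⟩, -, -⟩ := hdist
  rw [← sub_eq_zero, writhe_mul_swap_sub h hrs hστ hτσ,
    hni.betweenSign_eq hσσ.symm hτσ.symm hστ.symm hττ.symm,
    hni.symm.betweenSign_eq hσσ hστ hτσ hττ]
  simp only [sub_self]

/-- Let `(σ, τ)` be a grid diagram of size `n` and let `s = r + 1` be the
row above row `r`. Assume the four columns `σ r, τ r, σ s, τ s` are pairwise distinct, and
that the horizontal intervals `I = [min (σ r) (τ r), max (σ r) (τ r)]` and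
`J = [min (σ s) (τ s), max (σ s) (τ s)]` are non-interleaving: `I` and `J` are disjoint, or
one contains the other. Then commuting rows `r` and `r+1` (passing to `(σ∘t, τ∘t)` with
`t = (r, r+1)`) preserves the writhe. -/
theorem noninterleaving_commutation_writhe (n : ℕ) (hn : 2 ≤ n) (σ τ : Equiv.Perm (Fin n))
    (h : ∀ i, σ i ≠ τ i) (r s : Fin n) (hs : (s : ℕ) = (r : ℕ) + 1)
    (hdist : ([σ r, τ r, σ s, τ s] : List (Fin n)).Pairwise (· ≠ ·))
    (hni :
      Disjoint (Set.Icc (min (σ r) (τ r)) (max (σ r) (τ r)))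
          (Set.Icc (min (σ s) (τ s)) (max (σ s) (τ s))) ∨
      Set.Icc (min (σ r) (τ r)) (max (σ r) (τ r)) ⊆
          Set.Icc (min (σ s) (τ s)) (max (σ s) (τ s)) ∨
      Set.Icc (min (σ s) (τ s)) (max (σ s) (τ s)) ⊆
          Set.Icc (min (σ r) (τ r)) (max (σ r) (τ r))) :
    writhe (σ * Equiv.swap r s) (τ * Equiv.swap r s) = writhe σ τ :=
  noninterleaving_commutation_writhe_general n σ τ h r s hs hdist hni
end
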